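/- Let Σ be a smooth rank-k horizontal distribution on an open set U ⊆ ℝ^m and let f : U → ℝ be smooth. Then f is n-convex if and only if its horizontal Hessian is positive semidefinite, i.e., if and only if for every p ∈ U and every v ∈ Σ_p one has ⟨D(P∇f)(p)[v], v⟩ ≥ 0, where ∇f is the Euclidean gradient of f, P∇f is the vector field p ↦ P_p(∇f(p)), and D(P∇f)(p)[v] is its directional derivative at p in the direction v. -/

import Mathlib

open Set MeasureTheory
open scoped RealInnerProductSpace ENNReal

/-- A smooth rank-`k` horizontal distribution `Σ` on an open set `U ⊆ ℝ^m`, described by the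
field of orthogonal projections `P p` of `ℝ^m` onto the subspace `Σ_p`. -/
structure HorDistrib (m k : ℕ) where
  U : Set (EuclideanSpace ℝ (Fin m))
  isOpen_U : IsOpen U
  one_le_k : 1 ≤ k
  k_lt_m : k < m
  P : EuclideanSpace ℝ (Fin m) → EuclideanSpace ℝ (Fin m) →L[ℝ] EuclideanSpace ℝ (Fin m)
  smooth_P : ContDiffOn ℝ (⊤ : ℕ∞) P U
  idem : ∀ p ∈ U, ∀ v, P p (P p v) = P p v
  selfAdjoint : ∀ p ∈ U, ∀ v w, ⟪P p v, w⟫ = ⟪v, P p w⟫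
  rank : ∀ p ∈ U, Module.finrank ℝ (LinearMap.range (P p : EuclideanSpace ℝ (Fin m) →ₗ[ℝ] EuclideanSpace ℝ (Fin m))) = k

variable {m k : ℕ}

/-- The plane `Σ_p` of the distribution at `p`, as a subset of `ℝ^m`. -/
def HorDistrib.sigmaAt (D : HorDistrib m k) (p : EuclideanSpace ℝ (Fin m)) :
    Set (EuclideanSpace ℝ (Fin m)) := {v | D.P p v = v}

/-- `γ` is a (smooth) nonholonomic geodesic on the open set `I ⊆ ℝ`:  it is horizontal
(`γ' s ∈ Σ_{γ s}`) and `P_{γ s} (γ'' s) = 0`. -/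
def IsNhGeodesicOn (D : HorDistrib m k) (γ : ℝ → EuclideanSpace ℝ (Fin m)) (I : Set ℝ) : Prop :=
  IsOpen I ∧ (∀ s ∈ I, γ s ∈ D.U) ∧ ContDiffOn ℝ (⊤ : ℕ∞) γ I ∧
  (∀ s ∈ I, D.P (γ s) (deriv γ s) = deriv γ s) ∧
  (∀ s ∈ I, D.P (γ s) (deriv (deriv γ) s) = 0)

/-- A nonholonomic geodesic segment, parametrized on the closed interval `[c,d]`. -/
def IsGeodesicSegment (D : HorDistrib m k) (δ : ℝ → EuclideanSpace ℝ (Fin m)) (c d : ℝ) :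
    Prop :=
  c ≤ d ∧ (∀ s ∈ Icc c d, δ s ∈ D.U) ∧ ContDiffOn ℝ (⊤ : ℕ∞) δ (Icc c d) ∧
  (c < d →
    (∀ s ∈ Icc c d, D.P (δ s) (derivWithin δ (Icc c d) s) = derivWithin δ (Icc c d) s) ∧
    (∀ s ∈ Icc c d, D.P (δ s) (derivWithin (derivWithin δ (Icc c d)) (Icc c d) s) = 0))

/-- The length of a smooth segment. -/
noncomputable def segLength (δ : ℝ → EuclideanSpace ℝ (Fin m)) (c d : ℝ) : ℝ :=
  ∫ s in c..d, ‖derivWithin δ (Icc c d) s‖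

/-- A broken geodesic: a concatenation of finitely many nonholonomic geodesic segments,
with break points `t 0 ≤ t 1 ≤ ⋯ ≤ t n`. -/
def IsBrokenGeodesic (D : HorDistrib m k) (γ : ℝ → EuclideanSpace ℝ (Fin m))
    (n : ℕ) (t : Fin (n + 1) → ℝ) : Prop :=
  Monotone t ∧ ∀ i : Fin n, IsGeodesicSegment D γ (t i.castSucc) (t i.succ)

/-- The length of a broken geodesic. -/
noncomputable def brokenLength (γ : ℝ → EuclideanSpace ℝ (Fin m)) (n : ℕ)
    (t : Fin (n + 1) → ℝ) : ℝ :=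
  ∑ i : Fin n, segLength γ (t i.castSucc) (t i.succ)

/-- Two points are joined by a broken geodesic. -/
def JoinedByBrokenGeodesic (D : HorDistrib m k) (p q : EuclideanSpace ℝ (Fin m)) : Prop :=
  ∃ (n : ℕ) (γ : ℝ → EuclideanSpace ℝ (Fin m)) (t : Fin (n + 1) → ℝ),
    IsBrokenGeodesic D γ n t ∧ γ (t 0) = p ∧ γ (t (Fin.last n)) = q

/-- The distance `d_H`: the infimum of the lengths of broken geodesics joining `p` to `q`. -/
noncomputable def dH (D : HorDistrib m k) (p q : EuclideanSpace ℝ (Fin m)) : ℝ≥0∞ :=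
  sInf {L | ∃ (n : ℕ) (γ : ℝ → EuclideanSpace ℝ (Fin m)) (t : Fin (n + 1) → ℝ),
    IsBrokenGeodesic D γ n t ∧ γ (t 0) = p ∧ γ (t (Fin.last n)) = q ∧
    L = ENNReal.ofReal (brokenLength γ n t)}

/-- `γ` is an absolutely continuous horizontal curve on `[c,d]` with a.e. derivative `g`. -/
def IsHorizontalAC (D : HorDistrib m k) (γ g : ℝ → EuclideanSpace ℝ (Fin m)) (c d : ℝ) :
    Prop :=
  c ≤ d ∧ IntegrableOn g (Icc c d) ∧
  (∀ s ∈ Icc c d, γ s = γ c + ∫ r in c..s, g r) ∧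
  (∀ s ∈ Icc c d, γ s ∈ D.U) ∧
  (∀ᵐ s ∂(volume.restrict (Icc c d)), D.P (γ s) (g s) = g s)

/-- The Carnot–Carathéodory distance: the infimum of the lengths of absolutely continuous
horizontal curves joining `p` to `q`. -/
noncomputable def dc (D : HorDistrib m k) (p q : EuclideanSpace ℝ (Fin m)) : ℝ≥0∞ :=
  sInf {L | ∃ (γ g : ℝ → EuclideanSpace ℝ (Fin m)) (c d : ℝ),
    IsHorizontalAC D γ g c d ∧ γ c = p ∧ γ d = q ∧
    L = ENNReal.ofReal (∫ s in c..d, ‖g s‖)}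

/-- A (smooth) section of the distribution `Σ`. -/
def IsSection (D : HorDistrib m k) (V : EuclideanSpace ℝ (Fin m) → EuclideanSpace ℝ (Fin m)) :
    Prop :=
  ContDiffOn ℝ (⊤ : ℕ∞) V D.U ∧ ∀ p ∈ D.U, D.P p (V p) = V p

/-- The Lie bracket of two vector fields on `ℝ^m`. -/
noncomputable def lieBracket (X Y : EuclideanSpace ℝ (Fin m) → EuclideanSpace ℝ (Fin m)) :
    EuclideanSpace ℝ (Fin m) → EuclideanSpace ℝ (Fin m) :=
  fun p => fderiv ℝ Y p (X p) - fderiv ℝ X p (Y p)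

/-- `IsIterBracket D j V` :  `V` is an iterated Lie bracket of exactly `j` sections of `Σ`. -/
inductive IsIterBracket (D : HorDistrib m k) :
    ℕ → (EuclideanSpace ℝ (Fin m) → EuclideanSpace ℝ (Fin m)) → Prop
  | base : ∀ V, IsSection D V → IsIterBracket D 1 V
  | bracket : ∀ (a b : ℕ) (X Y), IsIterBracket D a X → IsIterBracket D b Y →
      IsIterBracket D (a + b) (lieBracket X Y)

/-- `Σ_i(p)`: the span of the evaluations at `p` of all iterated Lie brackets of at most `i`
sections of `Σ`. -/
noncomputable def sigmaFlag (D : HorDistrib m k) (i : ℕ) (p : EuclideanSpace ℝ (Fin m)) :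
    Submodule ℝ (EuclideanSpace ℝ (Fin m)) :=
  Submodule.span ℝ {v | ∃ j ≤ i, ∃ V, IsIterBracket D j V ∧ v = V p}

/-- `Σ` is bracket generating. -/
def BracketGenerating (D : HorDistrib m k) : Prop :=
  ∀ p ∈ D.U, ∃ l, sigmaFlag D l p = ⊤

/-- `Σ` is regular at `p`, with degree `l` (the least `l` with `Σ_l(p) = ℝ^m`) :  the
dimensions of the flag `Σ_i`, `i ≤ l`, are constant near `p`. -/
def RegularAt (D : HorDistrib m k) (p : EuclideanSpace ℝ (Fin m)) (l : ℕ) : Prop :=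
  sigmaFlag D l p = ⊤ ∧ (∀ i < l, sigmaFlag D i p ≠ ⊤) ∧
  ∃ W, IsOpen W ∧ p ∈ W ∧ W ⊆ D.U ∧
    ∀ i ≤ l, ∀ q ∈ W,
      Module.finrank ℝ (sigmaFlag D i q) = Module.finrank ℝ (sigmaFlag D i p)

/-- `f` is nonholonomically geodesically convex on `Ω`: its restriction to any nonholonomic
geodesic contained in `Ω` is convex. -/
def NConvexOn (D : HorDistrib m k) (Ω : Set (EuclideanSpace ℝ (Fin m)))
    (f : EuclideanSpace ℝ (Fin m) → ℝ) : Prop :=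
  ∀ (γ : ℝ → EuclideanSpace ℝ (Fin m)) (a b : ℝ), IsNhGeodesicOn D γ (Ioo a b) →
    (∀ s ∈ Ioo a b, γ s ∈ Ω) → ConvexOn ℝ (Ioo a b) (f ∘ γ)

/-- `Ω` is a nonholonomically geodesically convex set. -/
def NConvexSet (D : HorDistrib m k) (Ω : Set (EuclideanSpace ℝ (Fin m))) : Prop :=
  ∀ (γ : ℝ → EuclideanSpace ℝ (Fin m)) (a b : ℝ), IsNhGeodesicOn D γ (Ioo a b) →
    ∀ s₁ ∈ Ioo a b, ∀ s₂ ∈ Ioo a b, γ s₁ ∈ Ω → γ s₂ ∈ Ω → ∀ s ∈ Icc s₁ s₂, γ s ∈ Ω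
/-!
Along a nonholonomic geodesic `γ` one has `(f ∘ γ)' = ⟪P∇f, γ'⟫` because `γ'` is horizontal,
and `(f ∘ γ)'' = ⟪D(P∇f)[γ'], γ'⟫ + ⟪P∇f, γ''⟫ = ⟪D(P∇f)[γ'], γ'⟫` because `Pγ'' = 0` and `P` is
self-adjoint. So a nonnegative horizontal Hessian makes every `f ∘ γ` convex. Conversely, every
horizontal `v ∈ Σ_p` is the initial velocity of a nonholonomic geodesic: solve
`γ' = P_γ h`, `h' = -DP_γ[γ'] h` with `γ(0) = p`, `h(0) = v`; then
`P_γ γ'' = P_γ DP_γ[γ'] h + P_γ h' = 0` since `P_γ² = P_γ`. Convexity of `f ∘ γ` then forces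
`⟪D(P∇f)(p)[v], v⟫ = (f ∘ γ)''(0) ≥ 0`.
-/

open scoped Topology

local notation "ℝ^" n:max => EuclideanSpace ℝ (Fin n)

section Calculus

variable {E : Type*} [NormedAddCommGroup E] [NormedSpace ℝ E]

theorem contDiffOn_of_hasDerivAt_eq_comp {G : E → E} {Ω : Set E}
    (hG : ContDiffOn ℝ (⊤ : ℕ∞) G Ω) {z : ℝ → E} {I : Set ℝ} (hI : IsOpen I)
    (hz : ∀ s ∈ I, HasDerivAt z (G (z s)) s) (hmaps : MapsTo z I Ω) :
    ContDiffOn ℝ (⊤ : ℕ∞) z I := by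
  suffices H : ∀ n : ℕ, ContDiffOn ℝ n z I from contDiffOn_infty.mpr H
  intro n
  induction n with
  | zero =>
    exact contDiffOn_zero.mpr fun s hs =>
      (hz s hs).differentiableAt.continuousAt.continuousWithinAt
  | succ n ih =>
    rw [show ((n + 1 : ℕ) : WithTop ℕ∞) = (n : WithTop ℕ∞) + 1 by push_cast; ring,
      contDiffOn_succ_iff_deriv_of_isOpen hI]
    refine ⟨fun s hs => (hz s hs).differentiableAt.differentiableWithinAt, by simp, ?_⟩
    have hGz : ContDiffOn ℝ n (G ∘ z) I :=
      (hG.of_le (by exact_mod_cast le_top)).comp ih hmaps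
    exact hGz.congr fun s hs => (hz s hs).deriv

theorem exists_integralCurve_mapsTo [CompleteSpace E] {G : E → E} {Ω : Set E} (hΩ : IsOpen Ω)
    (hG : ContDiffOn ℝ 1 G Ω) {x₀ : E} (hx₀ : x₀ ∈ Ω) :
    ∃ z : ℝ → E, z 0 = x₀ ∧ ∃ δ > 0,
      MapsTo z (Ioo (-δ) δ) Ω ∧ ∀ s ∈ Ioo (-δ) δ, HasDerivAt z (G (z s)) s := by
  obtain ⟨z, hz0, ε, hε, hz⟩ :=
    ContDiffAt.exists_forall_mem_closedBall_exists_eq_forall_mem_Ioo_hasDerivAt₀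
      (hG.contDiffAt (hΩ.mem_nhds hx₀)) 0
  have hcurve : ∀ᶠ s in 𝓝 (0 : ℝ), HasDerivAt z (G (z s)) s :=
    Filter.eventually_of_mem (Ioo_mem_nhds (by linarith) (by linarith)) hz
  have hmaps : ∀ᶠ s in 𝓝 (0 : ℝ), z s ∈ Ω :=
    hcurve.self_of_nhds.continuousAt.preimage_mem_nhds (hΩ.mem_nhds (hz0 ▸ hx₀))
  obtain ⟨δ, hδ, hball⟩ := Metric.eventually_nhds_iff_ball.mp (hmaps.and hcurve)
  simp only [Real.ball_eq_Ioo, zero_sub, zero_add] at hball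
  exact ⟨z, hz0, δ, hδ, fun s hs => (hball s hs).1, fun s hs => (hball s hs).2⟩

theorem ConvexOn.nonneg_of_hasDerivAt_deriv {S : Set ℝ} {g : ℝ → ℝ} {x g'' : ℝ} (hS : IsOpen S)
    (hg : ConvexOn ℝ S g) (hd : ∀ y ∈ S, DifferentiableAt ℝ g y) (hx : x ∈ S)
    (hg'' : HasDerivAt (deriv g) g'' x) : 0 ≤ g'' :=
  hg''.hasDerivWithinAt.nonneg_of_monotoneOn (hS.preperfect x hx) (hg.monotoneOn_deriv hd)

end Calculus

namespace HorDistrib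

variable (D : HorDistrib m k)

noncomputable def horizontalGradient (f : ℝ^m → ℝ) (q : ℝ^m) : ℝ^m := D.P q (gradient f q)

theorem contDiffOn_horizontalGradient {f : ℝ^m → ℝ} (hf : ContDiffOn ℝ (⊤ : ℕ∞) f D.U) :
    ContDiffOn ℝ (⊤ : ℕ∞) (D.horizontalGradient f) D.U := by
  have hgrad : ContDiffOn ℝ (⊤ : ℕ∞) (gradient f) D.U :=
    (InnerProductSpace.toDual ℝ (ℝ^m)).symm.contDiff.comp_contDiffOn
      (hf.fderiv_of_isOpen D.isOpen_U (by simp))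
  exact D.smooth_P.clm_apply hgrad

theorem inner_horizontalGradient (f : ℝ^m → ℝ) {p v : ℝ^m} (hp : p ∈ D.U) (hv : D.P p v = v) :
    ⟪D.horizontalGradient f p, v⟫ = fderiv ℝ f p v := by
  rw [horizontalGradient, D.selfAdjoint p hp, hv, inner_gradient_left]

end HorDistrib

namespace IsNhGeodesicOn

variable {D : HorDistrib m k} {γ : ℝ → ℝ^m} {I : Set ℝ} {s : ℝ}

theorem isOpen (hγ : IsNhGeodesicOn D γ I) : IsOpen I := hγ.1

theorem contDiffOn (hγ : IsNhGeodesicOn D γ I) : ContDiffOn ℝ (⊤ : ℕ∞) γ I := hγ.2.2.1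

theorem mem_U (hγ : IsNhGeodesicOn D γ I) (hs : s ∈ I) : γ s ∈ D.U := hγ.2.1 s hs

theorem proj_deriv (hγ : IsNhGeodesicOn D γ I) (hs : s ∈ I) :
    D.P (γ s) (deriv γ s) = deriv γ s :=
  hγ.2.2.2.1 s hs

theorem proj_deriv_deriv (hγ : IsNhGeodesicOn D γ I) (hs : s ∈ I) :
    D.P (γ s) (deriv (deriv γ) s) = 0 :=
  hγ.2.2.2.2 s hs

theorem hasDerivAt (hγ : IsNhGeodesicOn D γ I) (hs : s ∈ I) : HasDerivAt γ (deriv γ s) s :=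
  ((hγ.contDiffOn.differentiableOn (by simp)).differentiableAt (hγ.isOpen.mem_nhds hs)).hasDerivAt

theorem hasDerivAt_deriv (hγ : IsNhGeodesicOn D γ I) (hs : s ∈ I) :
    HasDerivAt (deriv γ) (deriv (deriv γ) s) s := by
  have hγ' : ContDiffOn ℝ 1 (deriv γ) I :=
    hγ.contDiffOn.deriv_of_isOpen hγ.isOpen (WithTop.coe_le_coe.mpr le_top)
  exact ((hγ'.differentiableOn one_ne_zero).differentiableAt (hγ.isOpen.mem_nhds hs)).hasDerivAt

theorem hasDerivAt_comp (hγ : IsNhGeodesicOn D γ I) {f : ℝ^m → ℝ}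
    (hf : DifferentiableOn ℝ f D.U) (hs : s ∈ I) :
    HasDerivAt (f ∘ γ) ⟪D.horizontalGradient f (γ s), deriv γ s⟫ s := by
  rw [D.inner_horizontalGradient f (hγ.mem_U hs) (hγ.proj_deriv hs)]
  exact (hf.differentiableAt (D.isOpen_U.mem_nhds (hγ.mem_U hs))).hasFDerivAt.comp_hasDerivAt s
    (hγ.hasDerivAt hs)

theorem hasDerivAt_inner_horizontalGradient (hγ : IsNhGeodesicOn D γ I) {f : ℝ^m → ℝ}
    (hV : DifferentiableOn ℝ (D.horizontalGradient f) D.U) (hs : s ∈ I) :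
    HasDerivAt (fun t => ⟪D.horizontalGradient f (γ t), deriv γ t⟫)
      ⟪fderiv ℝ (D.horizontalGradient f) (γ s) (deriv γ s), deriv γ s⟫ s := by
  have hVγ : HasDerivAt (fun t => D.horizontalGradient f (γ t))
      (fderiv ℝ (D.horizontalGradient f) (γ s) (deriv γ s)) s :=
    (hV.differentiableAt (D.isOpen_U.mem_nhds (hγ.mem_U hs))).hasFDerivAt.comp_hasDerivAt s
      (hγ.hasDerivAt hs)
  have hacc : ⟪D.horizontalGradient f (γ s), deriv (deriv γ) s⟫ = 0 := by
    rw [HorDistrib.horizontalGradient, D.selfAdjoint _ (hγ.mem_U hs), hγ.proj_deriv_deriv hs,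
      inner_zero_right]
  have h := hVγ.inner ℝ (hγ.hasDerivAt_deriv hs)
  rwa [hacc, zero_add] at h

theorem hasDerivAt_deriv_comp (hγ : IsNhGeodesicOn D γ I) {f : ℝ^m → ℝ}
    (hf : ContDiffOn ℝ (⊤ : ℕ∞) f D.U) (hs : s ∈ I) :
    HasDerivAt (deriv (f ∘ γ))
      ⟪fderiv ℝ (D.horizontalGradient f) (γ s) (deriv γ s), deriv γ s⟫ s := by
  have hderiv : deriv (f ∘ γ) =ᶠ[𝓝 s] fun t => ⟪D.horizontalGradient f (γ t), deriv γ t⟫ :=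
    Filter.eventuallyEq_of_mem (hγ.isOpen.mem_nhds hs) fun t ht =>
      (hγ.hasDerivAt_comp (hf.differentiableOn (by simp)) ht).deriv
  exact (hγ.hasDerivAt_inner_horizontalGradient
    ((D.contDiffOn_horizontalGradient hf).differentiableOn (by simp)) hs).congr_of_eventuallyEq
    hderiv

end IsNhGeodesicOn

namespace HorDistrib

variable (D : HorDistrib m k) {f : ℝ^m → ℝ}

noncomputable def geodesicField (z : ℝ^m × ℝ^m) : ℝ^m × ℝ^m :=
  (D.P z.1 z.2, -fderiv ℝ D.P z.1 (D.P z.1 z.2) z.2)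

theorem contDiffOn_geodesicField : ContDiffOn ℝ (⊤ : ℕ∞) D.geodesicField (D.U ×ˢ univ) := by
  have hP : ContDiffOn ℝ (⊤ : ℕ∞) (fun z : ℝ^m × ℝ^m => D.P z.1) (D.U ×ˢ univ) :=
    D.smooth_P.comp contDiff_fst.contDiffOn fun z hz => hz.1
  have hDP : ContDiffOn ℝ (⊤ : ℕ∞) (fun z : ℝ^m × ℝ^m => fderiv ℝ D.P z.1) (D.U ×ˢ univ) :=
    (D.smooth_P.fderiv_of_isOpen D.isOpen_U (by simp)).comp contDiff_fst.contDiffOn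
      fun z hz => hz.1
  have hPz := hP.clm_apply contDiff_snd.contDiffOn
  exact hPz.prodMk ((hDP.clm_apply hPz).clm_apply contDiff_snd.contDiffOn).neg

theorem isNhGeodesicOn_fst_of_hasDerivAt_geodesicField {z : ℝ → ℝ^m × ℝ^m} {I : Set ℝ}
    (hI : IsOpen I) (hmaps : MapsTo z I (D.U ×ˢ univ))
    (hz : ∀ s ∈ I, HasDerivAt z (D.geodesicField (z s)) s) :
    IsNhGeodesicOn D (fun s => (z s).1) I := by
  have hγ : ∀ s ∈ I, HasDerivAt (fun t => (z t).1) (D.P (z s).1 (z s).2) s := fun s hs =>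
    (ContinuousLinearMap.fst ℝ (ℝ^m) (ℝ^m)).hasFDerivAt.comp_hasDerivAt s (hz s hs)
  have hh : ∀ s ∈ I, HasDerivAt (fun t => (z t).2)
      (-fderiv ℝ D.P (z s).1 (D.P (z s).1 (z s).2) (z s).2) s := fun s hs =>
    (ContinuousLinearMap.snd ℝ (ℝ^m) (ℝ^m)).hasFDerivAt.comp_hasDerivAt s (hz s hs)
  have hacc : ∀ s ∈ I, deriv (deriv fun t => (z t).1) s =
      fderiv ℝ D.P (z s).1 (D.P (z s).1 (z s).2) (z s).2 +
        D.P (z s).1 (-fderiv ℝ D.P (z s).1 (D.P (z s).1 (z s).2) (z s).2) := by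
    intro s hs
    have hP : HasDerivAt (fun t => D.P (z t).1) (fderiv ℝ D.P (z s).1 (D.P (z s).1 (z s).2)) s :=
      ((D.smooth_P.differentiableOn (by simp)).differentiableAt
        (D.isOpen_U.mem_nhds (hmaps hs).1)).hasFDerivAt.comp_hasDerivAt s (hγ s hs)
    rw [(Filter.eventuallyEq_of_mem (hI.mem_nhds hs) fun t ht => (hγ t ht).deriv).deriv_eq]
    exact (hP.clm_apply (hh s hs)).deriv
  have hzsmooth := contDiffOn_of_hasDerivAt_eq_comp D.contDiffOn_geodesicField hI hz hmaps
  refine ⟨hI, fun s hs => (hmaps hs).1, contDiff_fst.comp_contDiffOn hzsmooth,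
    fun s hs => ?_, fun s hs => ?_⟩
  · rw [(hγ s hs).deriv, D.idem _ (hmaps hs).1]
  · rw [hacc s hs, map_add, D.idem _ (hmaps hs).1, map_neg, add_neg_cancel]

theorem exists_isNhGeodesicOn {p v : ℝ^m} (hp : p ∈ D.U) (hv : D.P p v = v) :
    ∃ γ : ℝ → ℝ^m, ∃ δ > 0,
      IsNhGeodesicOn D γ (Ioo (-δ) δ) ∧ γ 0 = p ∧ deriv γ 0 = v := by
  obtain ⟨z, hz0, δ, hδ, hmaps, hz⟩ := exists_integralCurve_mapsTo (D.isOpen_U.prod isOpen_univ)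
    (D.contDiffOn_geodesicField.of_le (by exact_mod_cast le_top))
    (show (p, v) ∈ D.U ×ˢ univ from ⟨hp, trivial⟩)
  have hγ := D.isNhGeodesicOn_fst_of_hasDerivAt_geodesicField isOpen_Ioo hmaps hz
  refine ⟨_, δ, hδ, hγ, by simp [hz0], ?_⟩
  have h0 : (0 : ℝ) ∈ Ioo (-δ) δ := ⟨neg_lt_zero.mpr hδ, hδ⟩
  have hvel : HasDerivAt (fun s => (z s).1) (D.P (z 0).1 (z 0).2) 0 :=
    (ContinuousLinearMap.fst ℝ (ℝ^m) (ℝ^m)).hasFDerivAt.comp_hasDerivAt 0 (hz 0 h0)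
  rw [hvel.deriv, hz0, hv]

theorem nConvexOn_of_horizontal_hessian_nonneg (hf : ContDiffOn ℝ (⊤ : ℕ∞) f D.U)
    (hH : ∀ p ∈ D.U, ∀ v : ℝ^m, D.P p v = v →
      0 ≤ ⟪fderiv ℝ (D.horizontalGradient f) p v, v⟫) :
    NConvexOn D D.U f := by
  intro γ a b hγ _
  have hf' : DifferentiableOn ℝ f D.U := hf.differentiableOn (by simp)
  refine convexOn_of_hasDerivWithinAt2_nonneg (f' := deriv (f ∘ γ))
    (f'' := fun s => ⟪fderiv ℝ (D.horizontalGradient f) (γ s) (deriv γ s), deriv γ s⟫)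
    (convex_Ioo a b) (fun s hs => (hγ.hasDerivAt_comp hf' hs).continuousAt.continuousWithinAt)
    ?_ ?_ ?_ <;> rw [interior_Ioo]
  · exact fun s hs =>
      (hγ.hasDerivAt_comp hf' hs).differentiableAt.hasDerivAt.hasDerivWithinAt
  · exact fun s hs => (hγ.hasDerivAt_deriv_comp hf hs).hasDerivWithinAt
  · exact fun s hs => hH _ (hγ.mem_U hs) _ (hγ.proj_deriv hs)

theorem horizontal_hessian_nonneg_of_nConvexOn (hf : ContDiffOn ℝ (⊤ : ℕ∞) f D.U)
    (hconv : NConvexOn D D.U f) {p v : ℝ^m} (hp : p ∈ D.U)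
    (hv : D.P p v = v) :
    0 ≤ ⟪fderiv ℝ (D.horizontalGradient f) p v, v⟫ := by
  obtain ⟨γ, δ, hδ, hγ, hγ0, hγ'0⟩ := D.exists_isNhGeodesicOn hp hv
  have h0 : (0 : ℝ) ∈ Ioo (-δ) δ := ⟨neg_lt_zero.mpr hδ, hδ⟩
  have hf' : DifferentiableOn ℝ f D.U := hf.differentiableOn (by simp)
  have key := (hconv γ _ _ hγ fun s hs => hγ.mem_U hs).nonneg_of_hasDerivAt_deriv isOpen_Ioo
    (fun s hs => (hγ.hasDerivAt_comp hf' hs).differentiableAt) h0 (hγ.hasDerivAt_deriv_comp hf h0)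
  rwa [hγ0, hγ'0] at key

end HorDistrib

/-- A smooth function on `U` is n-convex iff its horizontal Hessian is
positive semidefinite: `⟪D(P ∇f)(p)[v], v⟫ ≥ 0` for all `p ∈ U` and `v ∈ Σ_p`. -/
theorem nconvex_iff_horizontal_hessian_nonneg {m k : ℕ} (D : HorDistrib m k)
    (f : EuclideanSpace ℝ (Fin m) → ℝ) (hf : ContDiffOn ℝ (⊤ : ℕ∞) f D.U) :
    NConvexOn D D.U f ↔
      ∀ p ∈ D.U, ∀ v : EuclideanSpace ℝ (Fin m), D.P p v = v →
        0 ≤ ⟪fderiv ℝ (fun q => D.P q (gradient f q)) p v, v⟫ :=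
  ⟨fun hconv _ hp _ hv => D.horizontal_hessian_nonneg_of_nConvexOn hf hconv hp hv,
    D.nConvexOn_of_horizontal_hessian_nonneg hf⟩
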